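/- arXiv:math/0303361 — 5 statements merged into one kernel-verified Lean document; each statement's English description precedes it below -/
import Mathlib

section
/- Let X be a complete separable metric space and T a semigroup acting on X by continuous selfmaps. If the action of T on X is strongly proximal, then the induced action of T on P(X) (the space of Borel probability measures with the weak* topology) is proximal. -/
/-! Average the two measures: strong proximality pushes `(λ₁ + λ₂) / 2` along some sequence to a
Dirac mass `δₓ`. Each `λᵢ` is at most twice the average, and a sequence of probability measures
dominated by a constant multiple of a sequence converging to `δₓ` must itself converge to `δₓ`,
since it gives vanishing mass to every closed set missing `x`. -/

open MeasureTheory Filter Topology BoundedContinuousFunction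
open scoped ENNReal

noncomputable instance instMSPM {Ω : Type*} [MeasurableSpace Ω] [TopologicalSpace Ω]
    [OpensMeasurableSpace Ω] : MeasurableSpace (ProbabilityMeasure Ω) := borel _

instance instBSPM {Ω : Type*} [MeasurableSpace Ω] [TopologicalSpace Ω]
    [OpensMeasurableSpace Ω] : BorelSpace (ProbabilityMeasure Ω) := ⟨rfl⟩

noncomputable def push {X : Type*} [MeasurableSpace X] [TopologicalSpace X] [BorelSpace X]
    (t : C(X, X)) (μ : ProbabilityMeasure X) : ProbabilityMeasure X :=
  μ.map t.continuous.measurable.aemeasurable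

noncomputable def diracPM {X : Type*} [MeasurableSpace X] (x : X) : ProbabilityMeasure X :=
  ⟨Measure.dirac x, inferInstance⟩

namespace MeasureTheory.ProbabilityMeasure

variable {X : Type*} [MeasurableSpace X]

noncomputable def average (μ ν : ProbabilityMeasure X) : ProbabilityMeasure X :=
  ⟨(2 : ℝ≥0∞)⁻¹ • (μ : Measure X) + (2 : ℝ≥0∞)⁻¹ • (ν : Measure X),
    ⟨by simp [ENNReal.inv_two_add_inv_two]⟩⟩

lemma toMeasure_average (μ ν : ProbabilityMeasure X) :
    (average μ ν : Measure X) = (2 : ℝ≥0∞)⁻¹ • (μ : Measure X) + (2 : ℝ≥0∞)⁻¹ • (ν : Measure X) :=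
  rfl

lemma two_smul_toMeasure_average (μ ν : ProbabilityMeasure X) :
    (2 : ℝ≥0∞) • (average μ ν : Measure X) = μ + ν := by
  rw [toMeasure_average, smul_add, smul_smul, smul_smul,
    ENNReal.mul_inv_cancel two_ne_zero ENNReal.ofNat_ne_top, one_smul, one_smul]

lemma toMeasure_le_two_smul_average_left (μ ν : ProbabilityMeasure X) :
    (μ : Measure X) ≤ (2 : ℝ≥0∞) • (average μ ν : Measure X) := by
  rw [two_smul_toMeasure_average]
  exact Measure.le_add_right le_rfl

lemma toMeasure_le_two_smul_average_right (μ ν : ProbabilityMeasure X) :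
    (ν : Measure X) ≤ (2 : ℝ≥0∞) • (average μ ν : Measure X) := by
  rw [two_smul_toMeasure_average]
  exact Measure.le_add_left le_rfl

end MeasureTheory.ProbabilityMeasure

open ProbabilityMeasure

lemma push_le_smul_push {X : Type*} [MeasurableSpace X] [TopologicalSpace X] [BorelSpace X]
    (t : C(X, X)) {μ ν : ProbabilityMeasure X} {c : ℝ≥0∞} (h : (μ : Measure X) ≤ c • ν) :
    (push t μ : Measure X) ≤ c • (push t ν : Measure X) := by
  simp only [push, toMeasure_map]
  rw [← Measure.map_smul]
  exact Measure.map_mono h t.continuous.measurable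

lemma tendsto_diracPM_of_le_smul {X ι : Type*} [TopologicalSpace X] [HasOuterApproxClosed X]
    [MeasurableSpace X] [OpensMeasurableSpace X] {L : Filter ι} [L.IsCountablyGenerated]
    {μs νs : ι → ProbabilityMeasure X} {x : X} {c : ℝ≥0∞} (hc : c ≠ ∞)
    (hle : ∀ i, (νs i : Measure X) ≤ c • (μs i : Measure X))
    (hμ : Tendsto μs L (𝓝 (diracPM x))) :
    Tendsto νs L (𝓝 (diracPM x)) := by
  refine tendsto_of_forall_isClosed_limsup_le' fun F hF => ?_
  by_cases hx : x ∈ F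
  · calc L.limsup (fun i => (νs i : Measure X) F) ≤ 1 := limsup_le_of_le (by isBoundedDefault)
          (.of_forall fun i => prob_le_one)
      _ = (diracPM x : Measure X) F := (Measure.dirac_apply_of_mem hx).symm
  · have hμF : L.limsup (fun i => (μs i : Measure X) F) = 0 := by
      refine le_antisymm ?_ bot_le
      simpa [diracPM, Measure.dirac_apply' x hF.measurableSet, hx] using
        limsup_measure_closed_le_of_tendsto hμ hF
    calc L.limsup (fun i => (νs i : Measure X) F)
        ≤ L.limsup (fun i => c * (μs i : Measure X) F) :=
          limsup_le_limsup (.of_forall fun i => hle i F)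
      _ = c * L.limsup (fun i => (μs i : Measure X) F) := ENNReal.limsup_const_mul_of_ne_top hc
      _ ≤ (diracPM x : Measure X) F := by simp [hμF]

theorem stmt0_general {X : Type*} [MetricSpace X] [MeasurableSpace X] [BorelSpace X]
    {T : Type*} (act : T → C(X, X))
    (hsp : ∀ lam : ProbabilityMeasure X, ∃ (t : ℕ → T) (x : X),
      Tendsto (fun n => push (act (t n)) lam) atTop (𝓝 (diracPM x))) :
    ∀ lam₁ lam₂ : ProbabilityMeasure X, ∃ (t : ℕ → T) (μ : ProbabilityMeasure X),
      Tendsto (fun n => push (act (t n)) lam₁) atTop (𝓝 μ) ∧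
      Tendsto (fun n => push (act (t n)) lam₂) atTop (𝓝 μ) := by
  intro lam₁ lam₂
  obtain ⟨t, x, ht⟩ := hsp (average lam₁ lam₂)
  exact ⟨t, diracPM x,
    tendsto_diracPM_of_le_smul ENNReal.ofNat_ne_top
      (fun n => push_le_smul_push _ (toMeasure_le_two_smul_average_left lam₁ lam₂)) ht,
    tendsto_diracPM_of_le_smul ENNReal.ofNat_ne_top
      (fun n => push_le_smul_push _ (toMeasure_le_two_smul_average_right lam₁ lam₂)) ht⟩

/-- If the action of a semigroup `T` on a complete separable metric space `X`
(by continuous self-maps) is strongly proximal, then the induced action on `P(X)`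
is proximal. -/
theorem stmt0 {X : Type*} [MetricSpace X] [CompleteSpace X]
    [TopologicalSpace.SeparableSpace X] [MeasurableSpace X] [BorelSpace X]
    {T : Type*} [Semigroup T] (act : T → C(X, X))
    (hact : ∀ s t : T, act (s * t) = (act s).comp (act t))
    (hsp : ∀ lam : ProbabilityMeasure X, ∃ (t : ℕ → T) (x : X),
      Tendsto (fun n => push (act (t n)) lam) atTop (𝓝 (diracPM x))) :
    ∀ lam₁ lam₂ : ProbabilityMeasure X, ∃ (t : ℕ → T) (μ : ProbabilityMeasure X),
      Tendsto (fun n => push (act (t n)) lam₁) atTop (𝓝 μ) ∧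
      Tendsto (fun n => push (act (t n)) lam₂) atTop (𝓝 μ) :=
  stmt0_general act hsp
end

section
/- Let X be a complete separable metric space and T a semigroup acting on X by continuous selfmaps. If the induced action of T on P(X) is proximal, then the action of T on X is strongly proximal. -/
open MeasureTheory Filter Topology BoundedContinuousFunction

/-!
Pair `lam` with a Dirac mass `δ x₀`: proximality gives `t n` along which both `t n • lam` and
`t n • δ x₀ = δ (t n x₀)` converge to a common `μ`. A weak limit of Dirac masses is a Dirac mass:
by the portmanteau inequality for open sets, the points `t n x₀` converge to any point `y` of the
support of `μ` (nonempty, as `X` is hereditarily Lindelöf), hence `μ = δ y`.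
-/

namespace MeasureTheory

variable {X : Type*} [TopologicalSpace X] [MeasurableSpace X]

lemma push_diracProba [BorelSpace X] (f : C(X, X)) (x : X) :
    push f (diracProba x) = diracProba (f x) :=
  Subtype.ext <| Measure.map_dirac' f.continuous.measurable x

lemma tendsto_of_tendsto_diracProba_of_mem_support [OpensMeasurableSpace X]
    [HasOuterApproxClosed X] {ι : Type*} {L : Filter ι} {f : ι → X} {μ : ProbabilityMeasure X}
    (hf : Tendsto (fun i ↦ diracProba (f i)) L (𝓝 μ)) {y : X}
    (hy : y ∈ (μ : Measure X).support) : Tendsto f L (𝓝 y) := by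
  refine (nhds_basis_opens y).tendsto_right_iff.mpr fun U ⟨hyU, hU⟩ ↦ ?_
  have hpos : 0 < L.liminf fun i ↦ (diracProba (f i) : Measure X) U :=
    ((Measure.mem_support_iff_forall y).mp hy U (hU.mem_nhds hyU)).trans_le
      (ProbabilityMeasure.le_liminf_measure_open_of_tendsto hf hU)
  filter_upwards [eventually_lt_of_lt_liminf hpos] with i hi
  by_contra hfi
  simp [diracProba_toMeasure_apply' _ hU.measurableSet, hfi] at hi

lemma exists_eq_diracProba_of_tendsto [BorelSpace X] [HasOuterApproxClosed X]
    [HereditarilyLindelofSpace X] {ι : Type*} {L : Filter ι} [L.NeBot] {f : ι → X}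
    {μ : ProbabilityMeasure X} (hf : Tendsto (fun i ↦ diracProba (f i)) L (𝓝 μ)) :
    ∃ y, μ = diracProba y := by
  obtain ⟨y, hy⟩ := Measure.nonempty_support (IsProbabilityMeasure.ne_zero (μ : Measure X))
  exact ⟨y, tendsto_nhds_unique hf <|
    (continuous_diracProba.tendsto y).comp (tendsto_of_tendsto_diracProba_of_mem_support hf hy)⟩

end MeasureTheory

theorem stmt1_general {X : Type*} [MetricSpace X]
    [TopologicalSpace.SeparableSpace X] [MeasurableSpace X] [BorelSpace X]
    {T : Type*} (act : T → C(X, X))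
    (hprox : ∀ lam₁ lam₂ : ProbabilityMeasure X, ∃ (t : ℕ → T) (μ : ProbabilityMeasure X),
      Tendsto (fun n => push (act (t n)) lam₁) atTop (𝓝 μ) ∧
      Tendsto (fun n => push (act (t n)) lam₂) atTop (𝓝 μ)) :
    ∀ lam : ProbabilityMeasure X, ∃ (t : ℕ → T) (x : X),
      Tendsto (fun n => push (act (t n)) lam) atTop (𝓝 (diracPM x)) := by
  intro lam
  obtain ⟨x₀⟩ := lam.nonempty
  obtain ⟨t, μ, hlam, hx₀⟩ := hprox lam (diracProba x₀)
  simp only [push_diracProba] at hx₀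
  obtain ⟨y, rfl⟩ := exists_eq_diracProba_of_tendsto hx₀
  exact ⟨t, y, hlam⟩

/-- If the induced action of a semigroup `T` on `P(X)` is proximal, then the action of
`T` on the complete separable metric space `X` is strongly proximal. -/
theorem stmt1 {X : Type*} [MetricSpace X] [CompleteSpace X]
    [TopologicalSpace.SeparableSpace X] [MeasurableSpace X] [BorelSpace X]
    {T : Type*} [Semigroup T] (act : T → C(X, X))
    (hact : ∀ s t : T, act (s * t) = (act s).comp (act t))
    (hprox : ∀ lam₁ lam₂ : ProbabilityMeasure X, ∃ (t : ℕ → T) (μ : ProbabilityMeasure X),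
      Tendsto (fun n => push (act (t n)) lam₁) atTop (𝓝 μ) ∧
      Tendsto (fun n => push (act (t n)) lam₂) atTop (𝓝 μ)) :
    ∀ lam : ProbabilityMeasure X, ∃ (t : ℕ → T) (x : X),
      Tendsto (fun n => push (act (t n)) lam) atTop (𝓝 (diracPM x)) :=
  stmt1_general act hprox
end

section
/- Let X be a compact metric space and T a topological semigroup acting on X by continuous maps. The action of T on X is strongly proximal if and only if the induced action of T on P(X) is strongly proximal. -/
open MeasureTheory Filter Topology BoundedContinuousFunction
open scoped ENNReal NNReal

noncomputable def push2 {X : Type*} [MeasurableSpace X] [TopologicalSpace X] [BorelSpace X]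
    (t : C(X, X)) (ρ : ProbabilityMeasure (ProbabilityMeasure X)) :
    ProbabilityMeasure (ProbabilityMeasure X) :=
  ρ.map (ProbabilityMeasure.continuous_map t.continuous).measurable.aemeasurable

/-!
The barycenter map `β : P(P(X)) → P(X)`, `β ρ = ∫ ν dρ(ν)`, is continuous, commutes with the
action, and satisfies `β δ_μ = μ` and `β (x ↦ δ_x)_* λ = λ`.

(⇒) Given `ρ`, choose `tₙ` with `tₙ (β ρ) → δ_x`. A closed set of measures avoiding `δ_x` lies
in `{ν | ε ≤ ν (B(x, ε)ᶜ)}` for some `ε > 0`, so by Markov's inequality its `tₙ ρ`-mass is at most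
`β (tₙ ρ) (B(x, ε)ᶜ) / ε = tₙ (β ρ) (B(x, ε)ᶜ) / ε → 0`; hence `tₙ ρ → δ_{δ_x}`.

(⇐) Given `λ`, apply the hypothesis to `ρ = (x ↦ δ_x)_* λ`. Every `tₙ ρ` lives on the closed set
of Dirac masses, so the limit is `δ_{δ_x}` for some `x`, and continuity of `β` gives
`tₙ λ = β (tₙ ρ) → δ_x`.
-/

open Set TopologicalSpace

section Dirac

variable {Ω : Type*} [MeasurableSpace Ω]

@[simp]
lemma toMeasure_diracPM (x : Ω) : (diracPM x).toMeasure = Measure.dirac x := rfl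

variable [TopologicalSpace Ω] [OpensMeasurableSpace Ω]

lemma continuous_diracPM : Continuous (diracPM : Ω → ProbabilityMeasure Ω) :=
  continuous_diracProba

lemma measurable_diracPM : Measurable (diracPM : Ω → ProbabilityMeasure Ω) :=
  continuous_diracPM.measurable

variable [HasOuterApproxClosed Ω]

lemma tendsto_diracPM_iff {ι : Type*} {L : Filter ι} [L.IsCountablyGenerated]
    {μs : ι → ProbabilityMeasure Ω} {x : Ω} :
    Tendsto μs L (𝓝 (diracPM x)) ↔
      ∀ F, IsClosed F → x ∉ F → Tendsto (fun i => (μs i).toMeasure F) L (𝓝 0) := by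
  constructor
  · intro h F hF hx
    have := ProbabilityMeasure.limsup_measure_closed_le_of_tendsto h hF
    rw [toMeasure_diracPM, Measure.dirac_apply' _ hF.measurableSet,
      indicator_of_notMem hx] at this
    exact tendsto_of_le_liminf_of_limsup_le (by simp) this
  · intro h
    rcases L.eq_or_neBot with rfl | _
    · exact tendsto_bot
    refine tendsto_of_forall_isClosed_limsup_le' fun F hF => ?_
    by_cases hx : x ∈ F
    · rw [toMeasure_diracPM, Measure.dirac_apply_of_mem hx]
      exact limsup_le_of_le (by isBoundedDefault) (Eventually.of_forall fun _ => prob_le_one)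
    · exact (h F hF hx).limsup_eq.trans_le zero_le

lemma ProbabilityMeasure.apply_eq_one_of_tendsto {ι : Type*} {L : Filter ι} [L.NeBot]
    {μs : ι → ProbabilityMeasure Ω} {μ : ProbabilityMeasure Ω} (hμ : Tendsto μs L (𝓝 μ))
    {F : Set Ω} (hF : IsClosed F) (h : ∀ i, (μs i).toMeasure F = 1) : μ.toMeasure F = 1 := by
  have := ProbabilityMeasure.limsup_measure_closed_le_of_tendsto hμ hF
  simp only [h, limsup_const] at this
  exact le_antisymm prob_le_one this

end Dirac

lemma exists_le_measure_compl_ball_of_notMem {X : Type*} [PseudoMetricSpace X] [MeasurableSpace X]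
    [OpensMeasurableSpace X] {x : X} {F : Set (ProbabilityMeasure X)} (hF : IsClosed F)
    (hx : diracPM x ∉ F) :
    ∃ ε : ℝ≥0, 0 < ε ∧ ∀ ν ∈ F, (ε : ℝ≥0∞) ≤ ν.toMeasure (Metric.ball x ε)ᶜ := by
  -- Otherwise `F` contains measures `νₖ` with `νₖ (B(x, 1/(k+1))ᶜ) < 1/(k+1)`, which tend to `δ_x`.
  by_contra! h
  choose ν hνF hν using fun k : ℕ => h (1 / (k + 1)) (by positivity)
  refine hx (hF.mem_of_tendsto ((tendsto_diracPM_iff (L := atTop)).2 fun G hG hxG => ?_)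
    (Eventually.of_forall hνF))
  obtain ⟨r, hr, hrG⟩ := Metric.isOpen_iff.1 hG.isOpen_compl x hxG
  have hε : Tendsto (fun k : ℕ => ((1 / (k + 1) : ℝ≥0) : ℝ≥0∞)) atTop (𝓝 0) :=
    ENNReal.tendsto_coe.2 tendsto_one_div_add_atTop_nhds_zero_nat
  refine tendsto_of_tendsto_of_tendsto_of_le_of_le' tendsto_const_nhds hε
    (Eventually.of_forall fun _ => zero_le) ?_
  have hsmall : ∀ᶠ k : ℕ in atTop, ((1 / (k + 1) : ℝ≥0) : ℝ) < r :=
    (NNReal.tendsto_coe.2 tendsto_one_div_add_atTop_nhds_zero_nat).eventually_lt_const hr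
  filter_upwards [hsmall] with k hk
  calc (ν k).toMeasure G ≤ (ν k).toMeasure (Metric.ball x (1 / (k + 1) : ℝ≥0))ᶜ :=
        measure_mono (subset_compl_comm.1 ((Metric.ball_subset_ball hk.le).trans hrG))
    _ ≤ _ := (hν k).le

section Barycenter

variable {X : Type*} [TopologicalSpace X] [MeasurableSpace X] [BorelSpace X]

lemma lowerSemicontinuous_toMeasure_apply [HasOuterApproxClosed X] {G : Set X} (hG : IsOpen G) :
    LowerSemicontinuous fun ν : ProbabilityMeasure X => ν.toMeasure G := fun ν _ hy =>
  eventually_lt_of_lt_liminf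
    (hy.trans_le (ProbabilityMeasure.le_liminf_measure_open_of_tendsto tendsto_id hG))

lemma toMeasure_push (t : C(X, X)) (μ : ProbabilityMeasure X) :
    (push t μ).toMeasure = μ.toMeasure.map t :=
  μ.toMeasure_map _

lemma toMeasure_push2 (t : C(X, X)) (ρ : ProbabilityMeasure (ProbabilityMeasure X)) :
    (push2 t ρ).toMeasure = ρ.toMeasure.map (push t) :=
  ρ.toMeasure_map _

lemma measurable_push (t : C(X, X)) : Measurable (push t) :=
  (ProbabilityMeasure.continuous_map t.continuous).measurable

lemma push_diracPM (t : C(X, X)) (x : X) : push t (diracPM x) = diracPM (t x) :=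
  ProbabilityMeasure.toMeasure_injective (Measure.map_dirac' t.continuous.measurable x)

lemma push2_map_diracPM (t : C(X, X)) (μ : ProbabilityMeasure X) :
    push2 t (μ.map measurable_diracPM.aemeasurable) =
      (push t μ).map measurable_diracPM.aemeasurable := by
  apply ProbabilityMeasure.toMeasure_injective
  rw [toMeasure_push2, ProbabilityMeasure.toMeasure_map, ProbabilityMeasure.toMeasure_map,
    toMeasure_push, Measure.map_map (measurable_push t) measurable_diracPM,
    Measure.map_map measurable_diracPM t.continuous.measurable]
  exact congrArg (Measure.map · _) (funext (push_diracPM t))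

variable [HasOuterApproxClosed X]

/- `ProbabilityMeasure X` carries the Borel σ-algebra of the weak topology here, not Mathlib's
Giry σ-algebra, so this is not `measurable_subtype_coe`. -/
lemma measurable_toMeasure :
    Measurable (ProbabilityMeasure.toMeasure : ProbabilityMeasure X → Measure X) :=
  .measure_of_isPiSystem_of_isProbabilityMeasure BorelSpace.measurable_eq isPiSystem_isOpen
    fun _ hG => (lowerSemicontinuous_toMeasure_apply hG).measurable

lemma measurable_toMeasure_apply {s : Set X} (hs : MeasurableSet s) :
    Measurable fun ν : ProbabilityMeasure X => ν.toMeasure s :=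
  (Measure.measurable_coe hs).comp measurable_toMeasure

noncomputable def barycenter (ρ : ProbabilityMeasure (ProbabilityMeasure X)) :
    ProbabilityMeasure X :=
  ⟨ρ.toMeasure.bind ProbabilityMeasure.toMeasure,
    isProbabilityMeasure_bind measurable_toMeasure.aemeasurable (ae_of_all _ fun ν => ν.prop)⟩

lemma barycenter_apply (ρ : ProbabilityMeasure (ProbabilityMeasure X)) {s : Set X}
    (hs : MeasurableSet s) : (barycenter ρ).toMeasure s = ∫⁻ ν, ν.toMeasure s ∂ρ.toMeasure :=
  Measure.bind_apply hs measurable_toMeasure.aemeasurable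

lemma lintegral_barycenter (ρ : ProbabilityMeasure (ProbabilityMeasure X)) {f : X → ℝ≥0∞}
    (hf : Measurable f) :
    ∫⁻ x, f x ∂(barycenter ρ).toMeasure = ∫⁻ ν, ∫⁻ x, f x ∂ν.toMeasure ∂ρ.toMeasure :=
  Measure.lintegral_bind measurable_toMeasure.aemeasurable hf.aemeasurable

lemma continuous_barycenter :
    Continuous (barycenter : ProbabilityMeasure (ProbabilityMeasure X) → _) := by
  refine ProbabilityMeasure.continuous_iff_forall_continuous_lintegral.2 fun f => ?_
  have hbound : ∀ ν : ProbabilityMeasure X,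
      dist (ν.toFiniteMeasure.testAgainstNN f) 0 ≤ dist f 0 := fun ν => by
    simpa using ν.testAgainstNN_lipschitz.dist_le_mul f 0
  let g : ProbabilityMeasure X →ᵇ ℝ≥0 :=
    .mkOfBound ⟨fun ν => ν.toFiniteMeasure.testAgainstNN f,
      ProbabilityMeasure.continuous_testAgainstNN_eval f⟩ (2 * dist f 0) fun ν ν' =>
      (dist_triangle_right _ _ 0).trans
        ((add_le_add (hbound ν) (hbound ν')).trans_eq (two_mul _).symm)
  have hg : ∀ ν : ProbabilityMeasure X, (g ν : ℝ≥0∞) = ∫⁻ x, f x ∂ν.toMeasure := fun ν =>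
    FiniteMeasure.testAgainstNN_coe_eq
  simp_rw [lintegral_barycenter _ f.continuous.measurable.coe_nnreal_ennreal, ← hg]
  exact ProbabilityMeasure.continuous_lintegral_boundedContinuousFunction g

lemma barycenter_diracPM (μ : ProbabilityMeasure X) : barycenter (diracPM μ) = μ :=
  ProbabilityMeasure.toMeasure_injective (Measure.dirac_bind measurable_toMeasure μ)

lemma barycenter_map_diracPM (μ : ProbabilityMeasure X) :
    barycenter (μ.map measurable_diracPM.aemeasurable) = μ := by
  ext s hs
  rw [barycenter_apply _ hs, ProbabilityMeasure.toMeasure_map,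
    lintegral_map (measurable_toMeasure_apply hs) measurable_diracPM]
  simp only [toMeasure_diracPM, Measure.dirac_apply' _ hs]
  exact lintegral_indicator_one hs

lemma barycenter_push2 (t : C(X, X)) (ρ : ProbabilityMeasure (ProbabilityMeasure X)) :
    barycenter (push2 t ρ) = push t (barycenter ρ) := by
  ext s hs
  have hpush : ∀ ν : ProbabilityMeasure X, (push t ν).toMeasure s = ν.toMeasure (t ⁻¹' s) :=
    fun ν => ν.map_apply' _ hs
  rw [barycenter_apply _ hs, toMeasure_push2,
    lintegral_map (measurable_toMeasure_apply hs) (measurable_push t)]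
  simp only [hpush]
  rw [← barycenter_apply _ (t.continuous.measurable hs)]

end Barycenter

section Separable

variable {X : Type*} [PseudoMetricSpace X] [SeparableSpace X] [MeasurableSpace X] [BorelSpace X]

lemma tendsto_diracPM_diracPM_of_tendsto_barycenter {ι : Type*} {L : Filter ι}
    [L.IsCountablyGenerated]
    {ρs : ι → ProbabilityMeasure (ProbabilityMeasure X)} {x : X}
    (h : Tendsto (fun i => barycenter (ρs i)) L (𝓝 (diracPM x))) :
    Tendsto ρs L (𝓝 (diracPM (diracPM x))) := by
  refine tendsto_diracPM_iff.2 fun F hF hxF => ?_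
  obtain ⟨ε, hε, hFε⟩ := exists_le_measure_compl_ball_of_notMem hF hxF
  have hB : IsClosed (Metric.ball x ε)ᶜ := Metric.isOpen_ball.isClosed_compl
  have hlim :
      Tendsto (fun i => (barycenter (ρs i)).toMeasure (Metric.ball x ε)ᶜ / ε) L (𝓝 0) := by
    simpa using ENNReal.Tendsto.div_const (tendsto_diracPM_iff.1 h _ hB (by simpa using hε.ne'))
      (Or.inr (ENNReal.coe_ne_zero.2 hε.ne'))
  refine tendsto_of_tendsto_of_tendsto_of_le_of_le tendsto_const_nhds hlim
    (fun _ => zero_le) fun i => ?_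
  calc (ρs i).toMeasure F
      ≤ (ρs i).toMeasure {ν | (ε : ℝ≥0∞) ≤ ν.toMeasure (Metric.ball x ε)ᶜ} := measure_mono hFε
    _ ≤ (∫⁻ ν, ν.toMeasure (Metric.ball x ε)ᶜ ∂(ρs i).toMeasure) / ε :=
        meas_ge_le_lintegral_div (measurable_toMeasure_apply hB.measurableSet).aemeasurable
          (ENNReal.coe_ne_zero.2 hε.ne') ENNReal.coe_ne_top
    _ = (barycenter (ρs i)).toMeasure (Metric.ball x ε)ᶜ / ε := by
        rw [barycenter_apply _ hB.measurableSet]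

end Separable

section Compact

variable {X : Type*} [MetricSpace X] [CompactSpace X] [MeasurableSpace X] [BorelSpace X]

lemma isClosed_range_diracPM : IsClosed (range (diracPM : X → ProbabilityMeasure X)) :=
  (isCompact_range continuous_diracPM).isClosed

lemma mem_range_diracPM_of_tendsto_map_diracPM {ι : Type*} {L : Filter ι} [L.NeBot]
    {μs : ι → ProbabilityMeasure X} {μ : ProbabilityMeasure X}
    (h : Tendsto (fun i => (μs i).map measurable_diracPM.aemeasurable) L (𝓝 (diracPM μ))) :
    μ ∈ range diracPM := by
  by_contra hμ
  have := ProbabilityMeasure.apply_eq_one_of_tendsto h isClosed_range_diracPM fun i => by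
    rw [ProbabilityMeasure.toMeasure_map,
      Measure.map_apply measurable_diracPM isClosed_range_diracPM.measurableSet, preimage_range,
      measure_univ]
  rw [toMeasure_diracPM, Measure.dirac_apply' _ isClosed_range_diracPM.measurableSet,
    indicator_of_notMem hμ] at this
  exact zero_ne_one this

end Compact

theorem stmt12_general {X : Type*} [MetricSpace X] [CompactSpace X] [MeasurableSpace X] [BorelSpace X]
    {T : Type*} (act : T → C(X, X)) :
    (∀ lam : ProbabilityMeasure X, ∃ (t : ℕ → T) (x : X),
      Tendsto (fun n => push (act (t n)) lam) atTop (𝓝 (diracPM x))) ↔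
    (∀ ρ : ProbabilityMeasure (ProbabilityMeasure X), ∃ (t : ℕ → T) (μ : ProbabilityMeasure X),
      Tendsto (fun n => push2 (act (t n)) ρ) atTop (𝓝 (diracPM μ))) := by
  constructor
  · intro h ρ
    obtain ⟨t, x, hx⟩ := h (barycenter ρ)
    refine ⟨t, diracPM x, tendsto_diracPM_diracPM_of_tendsto_barycenter ?_⟩
    simpa only [barycenter_push2] using hx
  · intro h μ
    obtain ⟨t, ν, hν⟩ := h (μ.map measurable_diracPM.aemeasurable)
    obtain ⟨x, rfl⟩ := mem_range_diracPM_of_tendsto_map_diracPM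
      (μs := fun n => push (act (t n)) μ) (by simpa only [push2_map_diracPM] using hν)
    refine ⟨t, x, ?_⟩
    simpa only [Function.comp_def, barycenter_push2, barycenter_map_diracPM,
      barycenter_diracPM] using (continuous_barycenter.tendsto _).comp hν

/-- For a compact metric space `X`: the action of the topological semigroup `T` on `X` is
strongly proximal iff the induced action of `T` on `P(X)` is strongly proximal. -/
theorem stmt12 {X : Type*} [MetricSpace X] [CompactSpace X] [MeasurableSpace X] [BorelSpace X]
    {T : Type*} [Semigroup T] [TopologicalSpace T] [ContinuousMul T]
    (act : T → C(X, X)) (hact : ∀ s t : T, act (s * t) = (act s).comp (act t)) :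
    (∀ lam : ProbabilityMeasure X, ∃ (t : ℕ → T) (x : X),
      Tendsto (fun n => push (act (t n)) lam) atTop (𝓝 (diracPM x))) ↔
    (∀ ρ : ProbabilityMeasure (ProbabilityMeasure X), ∃ (t : ℕ → T) (μ : ProbabilityMeasure X),
      Tendsto (fun n => push2 (act (t n)) ρ) atTop (𝓝 (diracPM μ))) :=
  stmt12_general act
end

section
/- Let V be a locally convex real vector space, {v₁,…,vₙ} linearly independent vectors, X their convex hull, and T a topological semigroup acting on X by surjective affine continuous maps. Then the action of T on X is proximal if and only if it is strongly proximal. -/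
/-!
With linearly independent vertices, an affine self-map of the simplex `X` is determined by the
barycentric coordinates of the images of the vertices, so the semigroup acts through
row-stochastic matrices, and the closure of its image (a compact metrizable set) is stable under
right multiplication by the matrices of `T`. Applying proximality to two rows of a point of this
closure and passing to a limit merges these two rows while keeping merged rows merged; after
finitely many steps one sequence in `T` sends every vertex, hence every point of `X`, to a single
point `z`, and dominated convergence pushes every measure on `X` to `δ_z`. Conversely, strong
proximality applied to `½ δₓ + ½ δᵧ`, tested against bump functions at the limit point (a
topological group is completely regular), shows that both orbits converge to it.

`V` need not be Hausdorff, so "merged" means inseparable rather than equal.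
-/

open MeasureTheory Filter Topology Set BoundedContinuousFunction

theorem IsTopologicalAddGroup.completelyRegularSpace (G : Type*) [TopologicalSpace G] [AddGroup G]
    [IsTopologicalAddGroup G] : CompletelyRegularSpace G :=
  @UniformSpace.toCompletelyRegularSpace G (IsTopologicalAddGroup.rightUniformSpace G)

theorem CompletelyRegularSpace.exists_bump {X : Type*} [TopologicalSpace X]
    [CompletelyRegularSpace X] {x : X} {U : Set X} (hU : U ∈ 𝓝 x) :
    ∃ g : X →ᵇ ℝ, g x = 1 ∧ (∀ y, g y ≤ 1) ∧ ∀ y ∉ U, g y = 0 := by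
  obtain ⟨f, hf, hfx, hfU⟩ := CompletelyRegularSpace.completely_regular x (interior U)ᶜ
    isOpen_interior.isClosed_compl (by simpa using mem_interior_iff_mem_nhds.2 hU)
  refine ⟨.mkOfBound ⟨fun y => 1 - f y, by fun_prop⟩ 1 fun y y' => ?_, by simp [hfx],
    fun y => by simpa using (f y).2.1, fun y hy => ?_⟩
  · have := Real.dist_le_of_mem_Icc_01 (f y').2 (f y).2
    simp only [ContinuousMap.coe_mk, Real.dist_eq] at this ⊢
    rwa [sub_sub_sub_cancel_left]
  · simp [hfU fun h => hy (interior_subset h)]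

theorem tendsto_of_forall_tendsto_half_add {X : Type*} [TopologicalSpace X]
    [CompletelyRegularSpace X] {a b : ℕ → X} {z : X}
    (h : ∀ g : X →ᵇ ℝ, Tendsto (fun k => 2⁻¹ * g (a k) + 2⁻¹ * g (b k)) atTop (𝓝 (g z))) :
    Tendsto a atTop (𝓝 z) := by
  refine tendsto_iff_forall_eventually_mem.2 fun U hU => ?_
  obtain ⟨g, hgz, hg1, hgU⟩ := CompletelyRegularSpace.exists_bump hU
  have hlarge : ∀ᶠ k in atTop, 3 / 4 < 2⁻¹ * g (a k) + 2⁻¹ * g (b k) :=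
    (h g).eventually (lt_mem_nhds (by rw [hgz]; norm_num))
  filter_upwards [hlarge] with k hk
  by_contra ha
  linarith [hgU _ ha, hg1 (b k)]

namespace MeasureTheory.ProbabilityMeasure

variable {α β : Type*} [MeasurableSpace α] [MeasurableSpace β]

theorem tendsto_map_of_tendsto_apply [TopologicalSpace β] [OpensMeasurableSpace β]
    (μ : ProbabilityMeasure α) {f : ℕ → α → β} {g : α → β} (hf : ∀ k, AEMeasurable (f k) μ)
    (hg : AEMeasurable g μ) (hfg : ∀ a, Tendsto (fun k => f k a) atTop (𝓝 (g a))) :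
    Tendsto (fun k => μ.map (hf k)) atTop (𝓝 (μ.map hg)) := by
  refine tendsto_iff_forall_integral_tendsto.2 fun φ => ?_
  have hφ : StronglyMeasurable φ := φ.continuous.measurable.stronglyMeasurable
  simp only [toMeasure_map, integral_map (hf _) hφ.aestronglyMeasurable,
    integral_map hg hφ.aestronglyMeasurable]
  refine tendsto_integral_of_dominated_convergence (fun _ => ‖φ‖)
    (fun k => hφ.aestronglyMeasurable.comp_aemeasurable (hf k)) (integrable_const _)
    (fun k => ae_of_all _ fun a => φ.norm_coe_le_norm _)
    (ae_of_all _ fun a => (φ.continuous.tendsto _).comp (hfg a))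

theorem map_const (μ : ProbabilityMeasure α) (b : β) :
    μ.map (aemeasurable_const (b := b)) = ⟨Measure.dirac b, inferInstance⟩ :=
  Subtype.ext <| by simp [Measure.map_const]

noncomputable def halfDiracAdd (x y : α) : ProbabilityMeasure α :=
  ⟨(2⁻¹ : ENNReal) • Measure.dirac x + (2⁻¹ : ENNReal) • Measure.dirac y,
    ⟨by simp [ENNReal.inv_two_add_inv_two]⟩⟩

theorem integral_halfDiracAdd {x y : α} {φ : α → ℝ} (hφ : StronglyMeasurable φ) :
    ∫ a, φ a ∂(halfDiracAdd x y : Measure α) = 2⁻¹ * φ x + 2⁻¹ * φ y := by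
  have hint : ∀ a : α, Integrable φ ((2⁻¹ : ENNReal) • Measure.dirac a) := fun a =>
    (integrable_dirac' hφ (by simp)).smul_measure (by simp)
  change ∫ a, φ a ∂((2⁻¹ : ENNReal) • Measure.dirac x + (2⁻¹ : ENNReal) • Measure.dirac y) = _
  rw [integral_add_measure (hint x) (hint y), integral_smul_measure, integral_smul_measure,
    integral_dirac' _ _ hφ, integral_dirac' _ _ hφ]
  simp

theorem tendsto_apply_of_tendsto_map_halfDiracAdd [TopologicalSpace β] [CompletelyRegularSpace β]
    [OpensMeasurableSpace β] {x y : α} {f : ℕ → α → β} (hf : ∀ k, Measurable (f k)) {z : β}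
    (h : Tendsto (fun k => (halfDiracAdd x y).map (hf k).aemeasurable) atTop
      (𝓝 ⟨Measure.dirac z, inferInstance⟩)) :
    Tendsto (fun k => f k x) atTop (𝓝 z) ∧ Tendsto (fun k => f k y) atTop (𝓝 z) := by
  have havg (g : β →ᵇ ℝ) :
      Tendsto (fun k => 2⁻¹ * g (f k x) + 2⁻¹ * g (f k y)) atTop (𝓝 (g z)) := by
    have hg : StronglyMeasurable g := g.continuous.measurable.stronglyMeasurable
    have hmap (k : ℕ) : ∫ b, g b ∂((halfDiracAdd x y).map (hf k).aemeasurable : Measure β) =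
        2⁻¹ * g (f k x) + 2⁻¹ * g (f k y) := by
      rw [toMeasure_map, integral_map (hf k).aemeasurable hg.aestronglyMeasurable]
      exact integral_halfDiracAdd (hg.comp_measurable (hf k))
    simpa only [hmap, coe_mk, integral_dirac' _ _ hg] using
      tendsto_iff_forall_integral_tendsto.1 h g
  exact ⟨tendsto_of_forall_tendsto_half_add havg,
    tendsto_of_forall_tendsto_half_add (b := fun k => f k x) fun g => by
      simpa only [add_comm] using havg g⟩

end MeasureTheory.ProbabilityMeasure

section Barycentric

variable {V ι : Type*} [AddCommGroup V] [Module ℝ V] [Fintype ι] (v : ι → V)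

theorem convexHull_range_eq_image_stdSimplex :
    convexHull ℝ (range v) = Fintype.linearCombination ℝ v '' stdSimplex ℝ ι := by
  classical
  rw [← convexHull_rangle_single_eq_stdSimplex, LinearMap.image_convexHull, ← range_comp]
  congr 1
  ext i
  simp [Fintype.linearCombination_apply_single]

noncomputable def barycentricCoords (x : V) : ι → ℝ :=
  Function.invFunOn (Fintype.linearCombination ℝ v) (stdSimplex ℝ ι) x

variable {v}

theorem barycentricCoords_mem_stdSimplex {x : V} (hx : x ∈ convexHull ℝ (range v)) :
    barycentricCoords v x ∈ stdSimplex ℝ ι := by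
  rw [convexHull_range_eq_image_stdSimplex] at hx
  exact Function.invFunOn_mem hx

theorem linearCombination_barycentricCoords {x : V} (hx : x ∈ convexHull ℝ (range v)) :
    Fintype.linearCombination ℝ v (barycentricCoords v x) = x := by
  rw [convexHull_range_eq_image_stdSimplex] at hx
  exact Function.invFunOn_eq hx

theorem mem_convexHull_linearCombination {a : ι → ℝ} (ha : a ∈ stdSimplex ℝ ι) :
    Fintype.linearCombination ℝ v a ∈ convexHull ℝ (range v) :=
  convexHull_range_eq_image_stdSimplex v ▸ mem_image_of_mem _ ha

theorem barycentricCoords_linearCombination (hv : LinearIndependent ℝ v) {a : ι → ℝ}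
    (ha : a ∈ stdSimplex ℝ ι) : barycentricCoords v (Fintype.linearCombination ℝ v a) = a :=
  hv.fintypeLinearCombination_injective <| linearCombination_barycentricCoords <|
    mem_convexHull_linearCombination ha

end Barycentric

section AffineOn

variable {V W : Type*} [AddCommGroup V] [Module ℝ V] [AddCommGroup W] [Module ℝ W]

def IsAffineOn (s : Set V) (f : V → W) : Prop :=
  ∀ x ∈ s, ∀ y ∈ s, ∀ a : ℝ, 0 ≤ a → a ≤ 1 → f (a • x + (1 - a) • y) = a • f x + (1 - a) • f y

theorem IsAffineOn.map_sum {s : Set V} {f : V → W} (hf : IsAffineOn s f) (hs : Convex ℝ s)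
    {ι : Type*} (t : Finset ι) {w : ι → ℝ} {x : ι → V} (hw₀ : ∀ i ∈ t, 0 ≤ w i)
    (hw₁ : ∑ i ∈ t, w i = 1) (hx : ∀ i ∈ t, x i ∈ s) :
    f (∑ i ∈ t, w i • x i) = ∑ i ∈ t, w i • f (x i) := by
  classical
  induction t using Finset.induction_on generalizing w with
  | empty => simp at hw₁
  | insert j t hj ih =>
    rw [Finset.sum_insert hj] at hw₁
    simp only [Finset.mem_insert, forall_eq_or_imp] at hw₀ hx
    set r := ∑ i ∈ t, w i
    have hr₀ : 0 ≤ r := Finset.sum_nonneg hw₀.2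
    rcases hr₀.eq_or_lt with hr | hr
    · have hzero : ∀ i ∈ t, w i = 0 := (Finset.sum_eq_zero_iff_of_nonneg hw₀.2).1 hr.symm
      have hwj : w j = 1 := by linarith
      have hV : ∑ i ∈ t, w i • x i = 0 := Finset.sum_eq_zero fun i hi => by simp [hzero i hi]
      have hW : ∑ i ∈ t, w i • f (x i) = 0 := Finset.sum_eq_zero fun i hi => by simp [hzero i hi]
      simp [Finset.sum_insert hj, hV, hW, hwj]
    -- average the remaining points with weights `w i / r`
    have hnorm : ∑ i ∈ t, w i / r = 1 := by rw [← Finset.sum_div, div_self hr.ne']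
    have hmem : ∑ i ∈ t, (w i / r) • x i ∈ s :=
      hs.sum_mem (fun i hi => div_nonneg (hw₀.2 i hi) hr₀) hnorm hx.2
    have h1r : 1 - w j = r := by linarith
    have hV : ∑ i ∈ t, w i • x i = (1 - w j) • ∑ i ∈ t, (w i / r) • x i := by
      simp only [Finset.smul_sum, smul_smul, h1r, mul_div_cancel₀ _ hr.ne']
    have hW : ∑ i ∈ t, w i • f (x i) = (1 - w j) • ∑ i ∈ t, (w i / r) • f (x i) := by
      simp only [Finset.smul_sum, smul_smul, h1r, mul_div_cancel₀ _ hr.ne']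
    rw [Finset.sum_insert hj, Finset.sum_insert hj, hV, hW,
      hf _ hx.1 _ hmem _ hw₀.1 (by linarith),
      ih (fun i hi => div_nonneg (hw₀.2 i hi) hr₀) hnorm hx.2]

end AffineOn

section Inseparable

variable {α X : Type*} [TopologicalSpace X]

theorem Filter.Tendsto.congr_inseparable {l : Filter α} {x y : α → X} {p : X}
    (h : Tendsto x l (𝓝 p)) (hxy : ∀ k, Inseparable (x k) (y k)) : Tendsto y l (𝓝 p) :=
  tendsto_nhds.2 fun U hU hpU =>
    Eventually.mono (tendsto_nhds.1 h U hU hpU) fun k hk => ((hxy k).mem_open_iff hU).1 hk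

end Inseparable

section AffineAction

variable {V T ι : Type*} [AddCommGroup V] [Module ℝ V] [TopologicalSpace V] [Mul T]

structure IsAffineActionOn (X : Set V) (act : T → V → V) : Prop where
  mapsTo : ∀ t, MapsTo (act t) X X
  continuousOn : ∀ t, ContinuousOn (act t) X
  isAffineOn : ∀ t, IsAffineOn X (act t)
  mul_apply : ∀ s t, ∀ x ∈ X, act (s * t) x = act s (act t x)

def IsProximalOn (X : Set V) (act : T → V → V) : Prop :=
  ∀ x ∈ X, ∀ y ∈ X, ∃ (t : ℕ → T) (z : V),
    Tendsto (fun k => act (t k) x) atTop (𝓝 z) ∧ Tendsto (fun k => act (t k) y) atTop (𝓝 z)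

variable [Fintype ι]

noncomputable def coordMatrix (v : ι → V) (act : T → V → V) (t : T) : ι → ι → ℝ :=
  fun i => barycentricCoords v (act t (v i))

variable {v : ι → V} {act : T → V → V}

theorem coordMatrix_mem_stdSimplex (hA : IsAffineActionOn (convexHull ℝ (range v)) act) (t : T)
    (i : ι) : coordMatrix v act t i ∈ stdSimplex ℝ ι :=
  barycentricCoords_mem_stdSimplex (hA.mapsTo t (subset_convexHull ℝ _ (mem_range_self i)))

theorem linearCombination_coordMatrix (hA : IsAffineActionOn (convexHull ℝ (range v)) act)
    (t : T) (i : ι) : Fintype.linearCombination ℝ v (coordMatrix v act t i) = act t (v i) :=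
  linearCombination_barycentricCoords (hA.mapsTo t (subset_convexHull ℝ _ (mem_range_self i)))

theorem IsAffineActionOn.apply_linearCombination
    (hA : IsAffineActionOn (convexHull ℝ (range v)) act) (t : T) {a : ι → ℝ}
    (ha : a ∈ stdSimplex ℝ ι) :
    act t (Fintype.linearCombination ℝ v a) =
      Fintype.linearCombination ℝ v (∑ j, a j • coordMatrix v act t j) := by
  rw [Fintype.linearCombination_apply, (hA.isAffineOn t).map_sum (convex_convexHull ℝ _) _
    (fun j _ => ha.1 j) ha.2 fun j _ => subset_convexHull ℝ _ (mem_range_self j)]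
  simp [linearCombination_coordMatrix hA]

theorem coordMatrix_mul (hA : IsAffineActionOn (convexHull ℝ (range v)) act)
    (hv : LinearIndependent ℝ v) (s t : T) :
    coordMatrix v act (s * t) = fun i => ∑ j, coordMatrix v act t i j • coordMatrix v act s j := by
  ext1 i
  have hmem := coordMatrix_mem_stdSimplex hA t i
  rw [coordMatrix, hA.mul_apply _ _ _ (subset_convexHull ℝ _ (mem_range_self i)),
    ← linearCombination_coordMatrix hA t i, hA.apply_linearCombination s hmem,
    barycentricCoords_linearCombination hv]
  exact (convex_stdSimplex ℝ ι).sum_mem (fun j _ => hmem.1 j) hmem.2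
    fun j _ => coordMatrix_mem_stdSimplex hA s j

/-- A coordinate version of the Ellis enveloping semigroup. -/
def coordEnvelope (v : ι → V) (act : T → V → V) : Set (ι → ι → ℝ) :=
  closure (range (coordMatrix v act))

theorem coordEnvelope_subset (hA : IsAffineActionOn (convexHull ℝ (range v)) act) :
    coordEnvelope v act ⊆ univ.pi fun _ => stdSimplex ℝ ι :=
  closure_minimal (range_subset_iff.2 fun t i _ => coordMatrix_mem_stdSimplex hA t i)
    (isClosed_set_pi fun _ _ => isClosed_stdSimplex ℝ ι)

theorem isCompact_coordEnvelope (hA : IsAffineActionOn (convexHull ℝ (range v)) act) :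
    IsCompact (coordEnvelope v act) :=
  (isCompact_univ_pi fun _ => isCompact_stdSimplex ℝ ι).of_isClosed_subset isClosed_closure
    (coordEnvelope_subset hA)

theorem mul_mem_coordEnvelope (hA : IsAffineActionOn (convexHull ℝ (range v)) act)
    (hv : LinearIndependent ℝ v) {B : ι → ι → ℝ} (hB : B ∈ coordEnvelope v act) (s : T) :
    (fun i => ∑ j, B i j • coordMatrix v act s j) ∈ coordEnvelope v act :=
  map_mem_closure (f := fun (C : ι → ι → ℝ) i => ∑ j, C i j • coordMatrix v act s j)
    (by fun_prop) hB (t := range (coordMatrix v act)) <| by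
    rintro _ ⟨t, rfl⟩
    exact ⟨s * t, coordMatrix_mul hA hv s t⟩

variable [IsTopologicalAddGroup V] [ContinuousSMul ℝ V]

theorem exists_tendsto_of_mem_coordEnvelope (hA : IsAffineActionOn (convexHull ℝ (range v)) act)
    {B : ι → ι → ℝ} (hB : B ∈ coordEnvelope v act) :
    ∃ t : ℕ → T, ∀ i, Tendsto (fun k => act (t k) (v i)) atTop
      (𝓝 (Fintype.linearCombination ℝ v (B i))) := by
  obtain ⟨M, hM, hlim⟩ := mem_closure_iff_seq_limit.1 hB
  choose t ht using hM
  refine ⟨t, fun i => ?_⟩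
  have hσ := (LinearMap.continuous_on_pi (Fintype.linearCombination ℝ v)).tendsto (B i)
  refine (hσ.comp (((continuous_apply i).tendsto B).comp hlim)).congr fun k => ?_
  simp [← ht k, linearCombination_coordMatrix hA]

theorem IsProximalOn.exists_mem_coordEnvelope_insert
    (hprox : IsProximalOn (convexHull ℝ (range v)) act)
    (hA : IsAffineActionOn (convexHull ℝ (range v)) act) (hv : LinearIndependent ℝ v)
    [DecidableEq ι] {i₀ a : ι} {s : Finset ι} {B : ι → ι → ℝ} (hB : B ∈ coordEnvelope v act)
    (hBs : ∀ i ∈ s, Inseparable (Fintype.linearCombination ℝ v (B i))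
      (Fintype.linearCombination ℝ v (B i₀))) :
    ∃ C ∈ coordEnvelope v act, ∀ i ∈ insert a s, Inseparable
      (Fintype.linearCombination ℝ v (C i)) (Fintype.linearCombination ℝ v (C i₀)) := by
  have hBΔ : ∀ i, B i ∈ stdSimplex ℝ ι := fun i => coordEnvelope_subset hA hB i (mem_univ i)
  have hBX : ∀ i, Fintype.linearCombination ℝ v (B i) ∈ convexHull ℝ (range v) := fun i =>
    mem_convexHull_linearCombination (hBΔ i)
  obtain ⟨g, ζ, hgi₀, hga⟩ := hprox _ (hBX i₀) _ (hBX a)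
  obtain ⟨C, hC, φ, hφ, hlim⟩ := (isCompact_coordEnvelope hA).tendsto_subseq
    fun j => mul_mem_coordEnvelope hA hv hB (g j)
  have hconv : ∀ l, Tendsto (fun j => act (g (φ j)) (Fintype.linearCombination ℝ v (B l)))
      atTop (𝓝 (Fintype.linearCombination ℝ v (C l))) := fun l =>
    (((LinearMap.continuous_on_pi _).tendsto _).comp
      (((continuous_apply l).tendsto C).comp hlim)).congr fun j =>
        (hA.apply_linearCombination _ (hBΔ l)).symm
  have hCi₀ : Inseparable (Fintype.linearCombination ℝ v (C i₀)) ζ :=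
    tendsto_nhds_unique_inseparable (hconv i₀) (hgi₀.comp hφ.tendsto_atTop)
  refine ⟨C, hC, (Finset.forall_mem_insert _ _ _).2 ⟨?_, fun i hi => ?_⟩⟩
  · exact (tendsto_nhds_unique_inseparable (hconv a) (hga.comp hφ.tendsto_atTop)).trans hCi₀.symm
  · exact tendsto_nhds_unique_inseparable (hconv i) <| (hconv i₀).congr_inseparable fun j =>
      ((hBs i hi).map_of_continuousOn (hA.continuousOn _) (hBX i) (hBX i₀)).symm

theorem IsProximalOn.exists_mem_coordEnvelope_forall_inseparable
    (hprox : IsProximalOn (convexHull ℝ (range v)) act)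
    (hA : IsAffineActionOn (convexHull ℝ (range v)) act) (hv : LinearIndependent ℝ v)
    (hne : (coordEnvelope v act).Nonempty) (i₀ : ι) :
    ∃ B ∈ coordEnvelope v act, ∀ i, Inseparable (Fintype.linearCombination ℝ v (B i))
      (Fintype.linearCombination ℝ v (B i₀)) := by
  classical
  suffices ∀ s : Finset ι, ∃ B ∈ coordEnvelope v act, ∀ i ∈ s,
      Inseparable (Fintype.linearCombination ℝ v (B i)) (Fintype.linearCombination ℝ v (B i₀)) by
    simpa using this Finset.univ
  intro s
  induction s using Finset.induction_on with
  | empty =>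
    obtain ⟨B, hB⟩ := hne
    exact ⟨B, hB, by simp⟩
  | insert a s _ ih =>
    obtain ⟨B, hB, hBs⟩ := ih
    exact hprox.exists_mem_coordEnvelope_insert hA hv hB hBs

theorem IsProximalOn.exists_forall_tendsto
    (hprox : IsProximalOn (convexHull ℝ (range v)) act)
    (hA : IsAffineActionOn (convexHull ℝ (range v)) act) (hv : LinearIndependent ℝ v)
    {p : V} (hp : p ∈ convexHull ℝ (range v)) :
    ∃ (t : ℕ → T) (z : V), z ∈ convexHull ℝ (range v) ∧
      ∀ x ∈ convexHull ℝ (range v), Tendsto (fun k => act (t k) x) atTop (𝓝 z) := by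
  obtain ⟨-, i₀, -⟩ := convexHull_nonempty_iff.1 ⟨p, hp⟩
  obtain ⟨t₀, -, -⟩ := hprox p hp p hp
  obtain ⟨B, hB, hins⟩ := hprox.exists_mem_coordEnvelope_forall_inseparable hA hv
    ⟨_, subset_closure (mem_range_self (t₀ 0))⟩ i₀
  obtain ⟨t, ht⟩ := exists_tendsto_of_mem_coordEnvelope hA hB
  have hvert : ∀ j, Tendsto (fun k => act (t k) (v j)) atTop
      (𝓝 (Fintype.linearCombination ℝ v (B i₀))) := fun j => (hins j).nhds_eq ▸ ht j
  refine ⟨t, _, mem_convexHull_linearCombination (coordEnvelope_subset hA hB i₀ (mem_univ _)),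
    fun x hx => ?_⟩
  obtain ⟨a, ha, rfl⟩ := convexHull_range_eq_image_stdSimplex v ▸ hx
  have hsum := tendsto_finsetSum Finset.univ fun j _ => (hvert j).const_smul (a j)
  rw [← Finset.sum_smul, ha.2, one_smul] at hsum
  refine hsum.congr fun k => ?_
  rw [Fintype.linearCombination_apply, (hA.isAffineOn _).map_sum (convex_convexHull ℝ _) _
    (fun j _ => ha.1 j) ha.2 fun j _ => subset_convexHull ℝ _ (mem_range_self j)]

end AffineAction

theorem stmt16_general {V : Type*} [AddCommGroup V] [Module ℝ V] [TopologicalSpace V]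
    [IsTopologicalAddGroup V] [ContinuousSMul ℝ V]
    [MeasurableSpace V] [BorelSpace V]
    {n : ℕ} (v : Fin n → V) (hv : LinearIndependent ℝ v)
    {T : Type*} [Semigroup T] (act : T → V → V)
    (hmaps : ∀ t, Set.MapsTo (act t) (convexHull ℝ (Set.range v)) (convexHull ℝ (Set.range v)))
    (hcont : ∀ t, ContinuousOn (act t) (convexHull ℝ (Set.range v)))
    (haff : ∀ t, ∀ x ∈ convexHull ℝ (Set.range v), ∀ y ∈ convexHull ℝ (Set.range v),
      ∀ a : ℝ, 0 ≤ a → a ≤ 1 →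
        act t (a • x + (1 - a) • y) = a • act t x + (1 - a) • act t y)
    (hact : ∀ s t : T, ∀ x ∈ convexHull ℝ (Set.range v), act (s * t) x = act s (act t x)) :
    (∀ x ∈ convexHull ℝ (Set.range v), ∀ y ∈ convexHull ℝ (Set.range v),
      ∃ (t : ℕ → T) (z : V),
        Tendsto (fun k => act (t k) x) atTop (𝓝 z) ∧
        Tendsto (fun k => act (t k) y) atTop (𝓝 z)) ↔
    (∀ μ : ProbabilityMeasure ↥(convexHull ℝ (Set.range v)),
      ∃ (t : ℕ → T) (x : V), x ∈ convexHull ℝ (Set.range v) ∧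
        Tendsto
          (fun k => μ.map (((hcont (t k)).comp_continuous continuous_subtype_val
            (fun p => p.2)).measurable.aemeasurable))
          atTop (𝓝 ⟨MeasureTheory.Measure.dirac x, inferInstance⟩)) := by
  have hA : IsAffineActionOn (convexHull ℝ (range v)) act := ⟨hmaps, hcont, haff, hact⟩
  constructor
  · intro hprox μ
    obtain ⟨p⟩ := nonempty_of_isProbabilityMeasure (μ : Measure (convexHull ℝ (range v)))
    obtain ⟨t, z, hz, hlim⟩ := IsProximalOn.exists_forall_tendsto hprox hA hv p.2
    refine ⟨t, z, hz, ?_⟩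
    rw [← μ.map_const z]
    exact μ.tendsto_map_of_tendsto_apply _ _ fun p => hlim p p.2
  · intro hstrong x hx y hy
    have := IsTopologicalAddGroup.completelyRegularSpace V
    obtain ⟨t, z, -, hlim⟩ := hstrong (ProbabilityMeasure.halfDiracAdd ⟨x, hx⟩ ⟨y, hy⟩)
    exact ⟨t, z, ProbabilityMeasure.tendsto_apply_of_tendsto_map_halfDiracAdd
      (fun k => ((hcont (t k)).comp_continuous continuous_subtype_val (fun p => p.2)).measurable)
      hlim⟩

/-- For a topological semigroup `T` acting by surjective affine continuous maps on the convex
hull `X` of a linearly independent finite set of vectors in a locally convex real TVS,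
the action is proximal iff it is strongly proximal.  Proximality: any two points of `X`
can be pushed by a common sequence of `T` to a common limit.  Strong proximality: any
probability measure on `X` can be pushed by a sequence of `T` to a Dirac measure at a
point of `X`. -/
theorem stmt16 {V : Type*} [AddCommGroup V] [Module ℝ V] [TopologicalSpace V]
    [IsTopologicalAddGroup V] [ContinuousSMul ℝ V] [LocallyConvexSpace ℝ V]
    [MeasurableSpace V] [BorelSpace V]
    {n : ℕ} (v : Fin n → V) (hv : LinearIndependent ℝ v)
    {T : Type*} [Semigroup T] [TopologicalSpace T] [ContinuousMul T] (act : T → V → V)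
    (hmaps : ∀ t, Set.MapsTo (act t) (convexHull ℝ (Set.range v)) (convexHull ℝ (Set.range v)))
    (hsurj : ∀ t, Set.SurjOn (act t) (convexHull ℝ (Set.range v)) (convexHull ℝ (Set.range v)))
    (hcont : ∀ t, ContinuousOn (act t) (convexHull ℝ (Set.range v)))
    (haff : ∀ t, ∀ x ∈ convexHull ℝ (Set.range v), ∀ y ∈ convexHull ℝ (Set.range v),
      ∀ a : ℝ, 0 ≤ a → a ≤ 1 →
        act t (a • x + (1 - a) • y) = a • act t x + (1 - a) • act t y)
    (hact : ∀ s t : T, ∀ x ∈ convexHull ℝ (Set.range v), act (s * t) x = act s (act t x)) :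
    (∀ x ∈ convexHull ℝ (Set.range v), ∀ y ∈ convexHull ℝ (Set.range v),
      ∃ (t : ℕ → T) (z : V),
        Tendsto (fun k => act (t k) x) atTop (𝓝 z) ∧
        Tendsto (fun k => act (t k) y) atTop (𝓝 z)) ↔
    (∀ μ : ProbabilityMeasure ↥(convexHull ℝ (Set.range v)),
      ∃ (t : ℕ → T) (x : V), x ∈ convexHull ℝ (Set.range v) ∧
        Tendsto
          (fun k => μ.map (((hcont (t k)).comp_continuous continuous_subtype_val
            (fun p => p.2)).measurable.aemeasurable))
          atTop (𝓝 ⟨MeasureTheory.Measure.dirac x, inferInstance⟩)) :=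
  stmt16_general v hv act hmaps hcont haff hact
end

section
/- Let X be a complete separable metric space and T a topological semigroup acting strongly proximally on X. If ρ ∈ P(P(X)) is T-invariant (tρ = ρ for all t ∈ T), then ρ is the Dirac measure concentrated at δₓ for some x ∈ X. -/
/-!
The barycenter `β(ρ) = ∫ μ dρ(μ)` of a measure `ρ` on `P(X)` is a probability measure on `X`, and
pushing forward commutes with it, so a `T`-invariant `ρ` has a `T`-invariant barycenter. Strong
proximality drives every point of `P(X)` to a Dirac mass along some orbit; an invariant point has a
constant orbit, so `β(ρ) = δₓ`. Finally `δₓ` is an extreme point: if `∫ μ dρ(μ) = δₓ`, then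
`ρ`-almost every `μ` is concentrated at `x`, i.e. `ρ = δ_{δₓ}`.
-/

open MeasureTheory Filter Topology

namespace MeasureTheory

lemma Measure.eq_dirac_of_ae_eq {α : Type*} [MeasurableSpace α] {μ : Measure α}
    [IsProbabilityMeasure μ] {a : α} (h : ∀ᵐ y ∂μ, y = a) : μ = dirac a :=
  calc μ = μ.map id := Measure.map_id.symm
    _ = μ.map fun _ ↦ a := Measure.map_congr h
    _ = dirac a := by simp [Measure.map_const]

namespace ProbabilityMeasure

variable {Ω : Type*} [MeasurableSpace Ω] [TopologicalSpace Ω] [HasOuterApproxClosed Ω]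
  [BorelSpace Ω]

lemma measurable_measure_of_isClosed {F : Set Ω} (hF : IsClosed F) :
    Measurable fun μ : ProbabilityMeasure Ω ↦ (μ : Measure Ω) F :=
  measurable_of_tendsto_metrizable
    (fun n ↦ (continuous_lintegral_boundedContinuousFunction (hF.apprSeq n)).measurable)
    (tendsto_pi_nhds.2 fun μ ↦ HasOuterApproxClosed.tendsto_lintegral_apprSeq hF μ)

/-- Here `P(Ω)` carries the Borel σ-algebra of the weak topology (`instMSPM`), not the Giry one. -/
lemma measurable_toMeasure : Measurable ((↑) : ProbabilityMeasure Ω → Measure Ω) :=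
  Measurable.measure_of_isPiSystem_of_isProbabilityMeasure
    (by rw [BorelSpace.measurable_eq (α := Ω), borel_eq_generateFrom_isClosed])
    isPiSystem_isClosed fun _ hF ↦ measurable_measure_of_isClosed hF

noncomputable def barycenter (ρ : ProbabilityMeasure (ProbabilityMeasure Ω)) :
    ProbabilityMeasure Ω :=
  ⟨(ρ : Measure (ProbabilityMeasure Ω)).bind (↑),
    isProbabilityMeasure_bind measurable_toMeasure.aemeasurable (ae_of_all _ fun μ ↦ μ.prop)⟩

lemma barycenter_apply (ρ : ProbabilityMeasure (ProbabilityMeasure Ω)) {s : Set Ω}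
    (hs : MeasurableSet s) :
    (barycenter ρ : Measure Ω) s = ∫⁻ μ, (μ : Measure Ω) s ∂(ρ : Measure (ProbabilityMeasure Ω)) :=
  Measure.bind_apply hs measurable_toMeasure.aemeasurable

lemma barycenter_map {Ω' : Type*} [MeasurableSpace Ω'] [TopologicalSpace Ω']
    [HasOuterApproxClosed Ω'] [BorelSpace Ω'] {f : Ω → Ω'} (hf : Continuous f)
    (ρ : ProbabilityMeasure (ProbabilityMeasure Ω)) :
    barycenter (ρ.map (continuous_map hf).measurable.aemeasurable) =
      (barycenter ρ).map hf.measurable.aemeasurable := by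
  refine toMeasure_injective (Measure.ext fun s hs ↦ ?_)
  rw [barycenter_apply _ hs, toMeasure_map, toMeasure_map, Measure.map_apply hf.measurable hs,
    barycenter_apply _ (hf.measurable hs),
    lintegral_map (f := fun μ : ProbabilityMeasure Ω' ↦ (μ : Measure Ω') s)
      ((Measure.measurable_coe hs).comp measurable_toMeasure) (continuous_map hf).measurable]
  exact lintegral_congr fun μ ↦ Measure.map_apply hf.measurable hs

lemma eq_dirac_of_barycenter_eq_dirac [MeasurableSingletonClass Ω]
    {ρ : ProbabilityMeasure (ProbabilityMeasure Ω)} {x : Ω} (h : barycenter ρ = diracPM x) :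
    ρ = diracPM (diracPM x) := by
  have hδ : ∀ᵐ y ∂(barycenter ρ : Measure Ω), y = x := by
    rw [h, show ((diracPM x : ProbabilityMeasure Ω) : Measure Ω) = Measure.dirac x from rfl,
      ae_dirac_eq]
    exact eventually_pure.2 rfl
  have hρ := Measure.ae_ae_of_ae_bind measurable_toMeasure.aemeasurable hδ
  refine toMeasure_injective (Measure.eq_dirac_of_ae_eq ?_)
  filter_upwards [hρ] with μ hμ using toMeasure_injective (Measure.eq_dirac_of_ae_eq hμ)

end ProbabilityMeasure

end MeasureTheory

theorem stmt17_general {X : Type*} [MetricSpace X] [MeasurableSpace X] [BorelSpace X]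
    {T : Type*} (act : T → C(X, X))
    (hsp : ∀ lam : ProbabilityMeasure X, ∃ (t : ℕ → T) (x : X),
      Tendsto (fun n => push (act (t n)) lam) atTop (𝓝 (diracPM x)))
    (ρ : ProbabilityMeasure (ProbabilityMeasure X)) (hinv : ∀ t : T, push2 (act t) ρ = ρ) :
    ∃ x : X, ρ = diracPM (diracPM x) := by
  have hfix (t : T) : push (act t) ρ.barycenter = ρ.barycenter :=
    (ProbabilityMeasure.barycenter_map (act t).continuous ρ).symm.trans
      (congrArg ProbabilityMeasure.barycenter (hinv t))
  obtain ⟨ts, x, hx⟩ := hsp ρ.barycenter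
  simp only [hfix] at hx
  exact ⟨x, ProbabilityMeasure.eq_dirac_of_barycenter_eq_dirac (tendsto_const_nhds_iff.mp hx)⟩

/-- If a topological semigroup `T` acts strongly proximally on a complete separable metric
space `X` and `ρ ∈ P(P(X))` is `T`-invariant, then `ρ` is the Dirac measure at some `δₓ`. -/
theorem stmt17 {X : Type*} [MetricSpace X] [CompleteSpace X]
    [TopologicalSpace.SeparableSpace X] [MeasurableSpace X] [BorelSpace X]
    {T : Type*} [Semigroup T] [TopologicalSpace T] [ContinuousMul T]
    (act : T → C(X, X)) (hact : ∀ s t : T, act (s * t) = (act s).comp (act t))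
    (hsp : ∀ lam : ProbabilityMeasure X, ∃ (t : ℕ → T) (x : X),
      Tendsto (fun n => push (act (t n)) lam) atTop (𝓝 (diracPM x)))
    (ρ : ProbabilityMeasure (ProbabilityMeasure X)) (hinv : ∀ t : T, push2 (act t) ρ = ρ) :
    ∃ x : X, ρ = diracPM (diracPM x) :=
  stmt17_general act hsp ρ hinv
end
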